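/- For an odd nonnegative integer n, every homogeneous quadratic form of degree (2,n) in the kernel of the down operator Δ is zero; for even n, the space of such forms is one-dimensional, spanned by θₙ⁽⁰⁾ = Σ_{i=0}^{n} (-1)ⁱ xᵢ x_{n-i}. -/

import Mathlib

open MvPolynomial Finset

/-- The down operator `Δ` on `Ω = k[x₀, x₁, x₂, ...]`. -/
noncomputable def downOp (k : Type*) [Field k] [CharZero k] :
    Derivation k (MvPolynomial ℕ k) (MvPolynomial ℕ k) :=
  MvPolynomial.mkDerivation k (fun n => if n = 0 then 0 else X (n - 1))

/-- `θₙ⁽⁰⁾ = Σ_{i=0}^{n} (-1)ⁱ xᵢ x_{n-i}`. -/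
noncomputable def theta0 (k : Type*) [Field k] [CharZero k] (n : ℕ) : MvPolynomial ℕ k :=
  ∑ i ∈ Finset.range (n + 1), (-1 : MvPolynomial ℕ k) ^ i * X i * X (n - i)

/-- `Ω_{(2,n)}`, the span of the monomials `xᵢ x_{n-i}` for `0 ≤ i ≤ n`. -/
noncomputable def quadSpace (k : Type*) [Field k] [CharZero k] (n : ℕ) :
    Submodule k (MvPolynomial ℕ k) :=
  Submodule.span k {p | ∃ i ≤ n, p = X i * X (n - i)}

/-!
Write `p = ∑ cᵢ xᵢ x_{n-i}`. Only the symmetrized coefficients `bᵢ = cᵢ + c_{n-i}` matter, since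
`2p = ∑ bᵢ xᵢ x_{n-i}`, and `∂ⱼ ∂_{n-j}` reads off `bⱼ` with no case split at the middle index.
As `Δ` lowers one index of each monomial, `Δ(∑ cᵢ xᵢ x_{n+1-i}) = ∑ (cᵢ + c_{i+1}) xᵢ x_{n-i}`, so
`Δp = 0` says `bⱼ + b_{j+1} = 0`, i.e. `bⱼ = (-1)ʲ b₀`. At `j = n`, where `bₙ = b₀`, this forces
`b₀ = 0` for odd `n`; for even `n` it gives `2p = b₀ θₙ⁽⁰⁾`.
-/

noncomputable def quadForm (R : Type*) [CommSemiring R] (n : ℕ) :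
    (ℕ → R) →ₗ[R] MvPolynomial ℕ R :=
  ∑ i ∈ range (n + 1), (LinearMap.proj i).smulRight (X i * X (n - i))

theorem eq_neg_one_pow_mul_of_add_succ_eq_zero {R : Type*} [Ring R] {b : ℕ → R} {N : ℕ}
    (h : ∀ j < N, b j + b (j + 1) = 0) : ∀ j ≤ N, b j = (-1) ^ j * b 0 := by
  intro j hj
  induction j with
  | zero => rw [pow_zero, one_mul]
  | succ j ih =>
    rw [pow_succ, eq_neg_of_add_eq_zero_right (h j hj), ih (Nat.le_of_succ_le hj)]
    noncomm_ring

section CommSemiring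

variable {R : Type*} [CommSemiring R] {n : ℕ}

theorem quadForm_apply (c : ℕ → R) :
    quadForm R n c = ∑ i ∈ range (n + 1), c i • (X i * X (n - i)) := by
  simp [quadForm]

theorem quadForm_congr {c d : ℕ → R} (h : ∀ i ≤ n, c i = d i) :
    quadForm R n c = quadForm R n d := by
  simp only [quadForm_apply]
  exact sum_congr rfl fun i hi => by rw [h i (Nat.lt_succ_iff.mp (mem_range.mp hi))]

theorem quadForm_reflect (c : ℕ → R) : quadForm R n (fun i => c (n - i)) = quadForm R n c := by
  rw [quadForm_apply, quadForm_apply, ← sum_range_reflect]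
  refine sum_congr rfl fun i hi => ?_
  have hi : i ≤ n := Nat.lt_succ_iff.mp (mem_range.mp hi)
  rw [Nat.add_sub_cancel, Nat.sub_sub_self hi, mul_comm]

theorem two_smul_quadForm (c : ℕ → R) :
    (2 : R) • quadForm R n c = quadForm R n (fun i => c i + c (n - i)) := by
  rw [two_smul]
  nth_rw 2 [← quadForm_reflect c]
  exact (map_add _ _ _).symm

theorem pderiv_pderiv_X_mul_X {i j : ℕ} (hi : i ≤ n) (hj : j ≤ n) :
    pderiv j (pderiv (n - j) (X i * X (n - i) : MvPolynomial ℕ R)) =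
      (if i = j then 1 else 0) + (if i = n - j then 1 else 0) := by
  classical
  rw [Derivation.leibniz, pderiv_X, pderiv_X, smul_eq_mul, smul_eq_mul, map_add,
    Derivation.leibniz, Derivation.leibniz]
  simp only [pderiv_X, Pi.single_apply, apply_ite (pderiv j), pderiv_one, map_zero, smul_eq_mul]
  split_ifs <;> first | omega | simp

theorem pderiv_pderiv_quadForm (c : ℕ → R) {j : ℕ} (hj : j ≤ n) :
    pderiv j (pderiv (n - j) (quadForm R n c)) = C (c j + c (n - j)) := by
  simp only [quadForm_apply, map_sum, Derivation.map_smul]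
  rw [sum_congr rfl fun i hi => by
    rw [pderiv_pderiv_X_mul_X (Nat.lt_succ_iff.mp (mem_range.mp hi)) hj]]
  simp only [smul_add, smul_ite, smul_zero, sum_add_distrib, sum_ite_eq', mem_range]
  rw [if_pos (by omega), if_pos (by omega), map_add, smul_eq_C_mul, smul_eq_C_mul, mul_one,
    mul_one]

theorem add_reflect_eq_zero_of_quadForm_eq_zero {c : ℕ → R} (h : quadForm R n c = 0) {j : ℕ}
    (hj : j ≤ n) : c j + c (n - j) = 0 := by
  have h' := pderiv_pderiv_quadForm c hj
  rwa [h, map_zero, map_zero, eq_comm, C_eq_zero] at h'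

end CommSemiring

section Field

variable {k : Type*} [Field k] [CharZero k] {n : ℕ}

theorem quadSpace_eq_range : quadSpace k n = LinearMap.range (quadForm k n) := by
  refine le_antisymm (Submodule.span_le.2 ?_) ?_
  · rintro _ ⟨i, hi, rfl⟩
    refine ⟨Pi.single i 1, ?_⟩
    rw [quadForm_apply, sum_eq_single i]
    · simp
    · intro j _ hji; simp [hji]
    · intro h; exact absurd (mem_range.2 (Nat.lt_succ_of_le hi)) h
  · rintro _ ⟨c, rfl⟩
    rw [quadForm_apply]
    exact Submodule.sum_mem _ fun i hi => Submodule.smul_mem _ _ (Submodule.subset_span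
      ⟨i, Nat.lt_succ_iff.mp (mem_range.mp hi), rfl⟩)

theorem theta0_eq_quadForm : theta0 k n = quadForm k n (fun i => (-1) ^ i) := by
  rw [theta0, quadForm_apply]
  refine sum_congr rfl fun i _ => ?_
  rw [smul_eq_C_mul, map_pow, map_neg, map_one, mul_assoc]

theorem downOp_X (m : ℕ) : downOp k (X (m + 1)) = X m := by
  simp [downOp, mkDerivation_X]

theorem downOp_X_zero : downOp k (X 0) = 0 := by
  simp [downOp, mkDerivation_X]

theorem downOp_quadForm_succ (c : ℕ → k) :
    downOp k (quadForm k (n + 1) c) = quadForm k n (fun i => c i + c (i + 1)) := by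
  have lower :
      ∑ i ∈ range (n + 2), c i • ((X i : MvPolynomial ℕ k) • downOp k (X (n + 1 - i))) =
      ∑ i ∈ range (n + 1), c i • (X i * X (n - i)) := by
    rw [sum_range_succ, Nat.sub_self, downOp_X_zero, smul_zero, smul_zero, add_zero]
    refine sum_congr rfl fun i hi => ?_
    rw [show n + 1 - i = n - i + 1 by have := mem_range.mp hi; omega, downOp_X, smul_eq_mul]
  have upper :
      ∑ i ∈ range (n + 2), c i • ((X (n + 1 - i) : MvPolynomial ℕ k) • downOp k (X i)) =
      ∑ i ∈ range (n + 1), c (i + 1) • (X i * X (n - i)) := by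
    rw [sum_range_succ', downOp_X_zero, smul_zero, smul_zero, add_zero]
    refine sum_congr rfl fun i _ => ?_
    rw [Nat.add_sub_add_right, downOp_X, smul_eq_mul, mul_comm]
  simp only [quadForm_apply, map_sum, Derivation.map_smul, Derivation.leibniz, smul_add,
    sum_add_distrib, add_smul, lower, upper]

theorem add_reflect_eq_of_downOp_quadForm_eq_zero {c : ℕ → k} (h : downOp k (quadForm k n c) = 0)
    {j : ℕ} (hj : j ≤ n) : c j + c (n - j) = (-1) ^ j * (c 0 + c n) := by
  cases n with
  | zero => obtain rfl := Nat.le_zero.mp hj; simp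
  | succ m =>
    rw [downOp_quadForm_succ] at h
    refine eq_neg_one_pow_mul_of_add_succ_eq_zero (b := fun i => c i + c (m + 1 - i))
      (fun i hi => ?_) j hj
    have hm := add_reflect_eq_zero_of_quadForm_eq_zero h (Nat.lt_succ_iff.mp hi)
    rw [show m + 1 - i = m - i + 1 by omega, Nat.add_sub_add_right]
    linear_combination hm

theorem two_smul_quadForm_of_downOp_eq_zero {c : ℕ → k} (h : downOp k (quadForm k n c) = 0) :
    (2 : k) • quadForm k n c = (c 0 + c n) • theta0 k n := by
  rw [two_smul_quadForm, theta0_eq_quadForm, ← map_smul]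
  refine quadForm_congr fun i hi => ?_
  rw [add_reflect_eq_of_downOp_quadForm_eq_zero h hi, Pi.smul_apply, smul_eq_mul, mul_comm]

theorem downOp_theta0 : downOp k (theta0 k n) = 0 := by
  cases n with
  | zero => simp [theta0, downOp_X_zero]
  | succ m =>
    rw [theta0_eq_quadForm, downOp_quadForm_succ, ← map_zero (quadForm k m)]
    exact quadForm_congr fun i _ => by rw [pow_succ, Pi.zero_apply]; ring

theorem theta0_ne_zero (hn : Even n) : theta0 k n ≠ 0 := by
  intro h
  have h0 := add_reflect_eq_zero_of_quadForm_eq_zero (theta0_eq_quadForm (k := k) ▸ h) n.zero_le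
  rw [pow_zero, Nat.sub_zero, hn.neg_one_pow] at h0
  exact two_ne_zero (one_add_one_eq_two.symm.trans h0)

end Field

/-- For odd `n`, every quadratic form of degree `(2,n)` in `ker Δ` is zero; for even `n`,
the space of such forms is one-dimensional, spanned by `θₙ⁽⁰⁾`. -/
theorem ker_downOp_quadSpace (k : Type*) [Field k] [CharZero k] (n : ℕ) :
    (Odd n → ∀ p ∈ quadSpace k n, downOp k p = 0 → p = 0) ∧
    (Even n →
      theta0 k n ∈ quadSpace k n ∧ downOp k (theta0 k n) = 0 ∧ theta0 k n ≠ 0 ∧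
      ∀ p ∈ quadSpace k n, downOp k p = 0 → ∃ c : k, p = c • theta0 k n) := by
  simp only [quadSpace_eq_range, LinearMap.mem_range, forall_exists_index, forall_apply_eq_imp_iff]
  refine ⟨fun hodd c hΔ => ?_, fun heven =>
    ⟨⟨_, theta0_eq_quadForm.symm⟩, downOp_theta0, theta0_ne_zero heven, fun c hΔ => ?_⟩⟩
  · have hc : c 0 + c n = 0 := by
      have h := add_reflect_eq_of_downOp_quadForm_eq_zero hΔ le_rfl
      rw [Nat.sub_self, hodd.neg_one_pow] at h
      have h2 : (2 : k) * (c 0 + c n) = 0 := by linear_combination h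
      exact (mul_eq_zero.mp h2).resolve_left two_ne_zero
    have h2 := two_smul_quadForm_of_downOp_eq_zero hΔ
    rw [hc, zero_smul] at h2
    exact (smul_eq_zero.mp h2).resolve_left two_ne_zero
  · refine ⟨(c 0 + c n) / 2, ?_⟩
    rw [div_eq_inv_mul, mul_smul, ← two_smul_quadForm_of_downOp_eq_zero hΔ,
      inv_smul_smul₀ two_ne_zero]
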